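/- arXiv:2506.13748 — 3 statements merged into one kernel-verified Lean document; each statement's English description precedes it below -/
import Mathlib

section
/- For every ribbon graph 𝔾 and every subset A ⊆ E(𝔾), contraction equals partial duality followed by deletion: 𝔾/A = 𝔾^A ∖ A. -/
/-!
Formalization of ribbon graphs in the flag (graph-encoded-map) presentation:
a finite set of flags with three involutions `s0, s1, s2` such that `s0 ∘ s2 = s2 ∘ s0`
is fixed-point-free, together with a finite set of (labelled) isolated vertices.
Vertices are the orbits of `⟨s1,s2⟩` together with the isolated vertices, edges the
orbits of `⟨s0,s2⟩`, boundary components the orbits of `⟨s0,s1⟩` together with one per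
isolated vertex, and connected components the orbits of `⟨s0,s1,s2⟩` together with the
isolated vertices.  On top of this we define partial duality, deletion, contraction,
quasi-trees and their activities, packaged ribbon graphs, the packaged surface Tutte
polynomial and the generalised Krushkal polynomial.
-/

open scoped Classical

noncomputable section

namespace QTE

/-- A combinatorial ribbon graph: flags with three maps, plus labelled isolated vertices. -/
structure Ribbon (α : Type) where
  flags : Finset α
  s0 : α → α
  s1 : α → α
  s2 : α → α
  isolated : Finset (Finset α)

namespace Ribbon

variable {α : Type}

/-- One step of any of the maps in `fs`, within the set `F`. -/
def Step (F : Finset α) (fs : List (α → α)) (x y : α) : Prop :=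
  x ∈ F ∧ y ∈ F ∧ ∃ s ∈ fs, s x = y

/-- The orbit equivalence relation on `F` generated by the maps in `fs`. -/
def Orb (F : Finset α) (fs : List (α → α)) (x y : α) : Prop :=
  Relation.EqvGen (Step F fs) x y

/-- The orbit of `x` in `F` under the maps `fs`. -/
def orbitOf (F : Finset α) (fs : List (α → α)) (x : α) : Finset α :=
  F.filter (fun y => Orb F fs x y)

/-- All orbits of the maps `fs` on `F`. -/
def orbits (F : Finset α) (fs : List (α → α)) : Finset (Finset α) :=
  F.image (orbitOf F fs)

variable (G : Ribbon α)

/-- The vertices carrying flags: orbits of `⟨s1,s2⟩`. -/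
def vertexOrbits : Finset (Finset α) := orbits G.flags [G.s1, G.s2]

/-- The edges: orbits of `⟨s0,s2⟩`. -/
def edgeSet : Finset (Finset α) := orbits G.flags [G.s0, G.s2]

/-- The boundary components consisting of flags: orbits of `⟨s0,s1⟩`. -/
def boundaryOrbits : Finset (Finset α) := orbits G.flags [G.s0, G.s1]

/-- The connected components carrying flags: orbits of `⟨s0,s1,s2⟩`. -/
def compOrbits : Finset (Finset α) := orbits G.flags [G.s0, G.s1, G.s2]

/-- The vertex set: vertex orbits together with the isolated vertices. -/
def vertexSet : Finset (Finset α) := G.vertexOrbits ∪ G.isolated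

/-- The boundary components: boundary orbits plus one per isolated vertex. -/
def bSet : Finset (Finset α) := G.boundaryOrbits ∪ G.isolated

/-- The connected components: flag components plus the isolated vertices. -/
def compSet : Finset (Finset α) := G.compOrbits ∪ G.isolated

/-- `v(𝔾)`, the number of vertices. -/
def numV : ℕ := G.vertexSet.card
/-- `e(𝔾)`, the number of edges. -/
def numE : ℕ := G.edgeSet.card
/-- `b(𝔾)`, the number of boundary components. -/
def numB : ℕ := G.bSet.card
/-- `k(𝔾)`, the number of connected components. -/
def numK : ℕ := G.compSet.card

/-- Connectedness of a ribbon graph. -/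
def Connected : Prop := G.numK = 1

/-- Euler genus `γ(𝔾) = 2k(𝔾) − v(𝔾) + e(𝔾) − b(𝔾)`. -/
def eulerGenus : ℤ :=
  2 * (G.numK : ℤ) - (G.numV : ℤ) + (G.numE : ℤ) - (G.numB : ℤ)

/-- The axioms making the combinatorial data a genuine ribbon graph:
`s0,s1,s2` are involutions of the flag set (and the identity elsewhere),
`s0` and `s2` commute, and `s0 ∘ s2` is fixed-point-free. -/
def IsRibbon : Prop :=
  (∀ f ∈ G.flags, G.s0 f ∈ G.flags ∧ G.s1 f ∈ G.flags ∧ G.s2 f ∈ G.flags) ∧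
  (∀ f ∈ G.flags, G.s0 (G.s0 f) = f ∧ G.s1 (G.s1 f) = f ∧ G.s2 (G.s2 f) = f) ∧
  (∀ f, f ∉ G.flags → G.s0 f = f ∧ G.s1 f = f ∧ G.s2 f = f) ∧
  (∀ f ∈ G.flags, G.s0 (G.s2 f) = G.s2 (G.s0 f)) ∧
  (∀ f ∈ G.flags, G.s0 (G.s2 f) ≠ f)

/-- The flags lying on the edges of `A`. -/
def flagsOf (A : Finset (Finset α)) : Finset α := A.biUnion id

/-- The partial dual `𝔾^A`: on the flags of edges of `A` the maps `s0` and `s2`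
are interchanged; all other data is unchanged. -/
def partialDual (A : Finset (Finset α)) : Ribbon α where
  flags := G.flags
  s0 := fun f => if f ∈ G.flags then (if f ∈ flagsOf A then G.s2 f else G.s0 f) else f
  s1 := G.s1
  s2 := fun f => if f ∈ G.flags then (if f ∈ flagsOf A then G.s0 f else G.s2 f) else f
  isolated := G.isolated

/-- The geometric dual `𝔾* = 𝔾^{E(𝔾)}`. -/
def dual : Ribbon α := G.partialDual G.edgeSet

/-- The first iterate of `step` starting from `a` that lies in `keep`. -/
def firstIn (keep : Finset α) (step : α → α) (a : α) : α :=
  if h : ∃ k, step^[k] a ∈ keep then step^[Nat.find h] a else a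

/-- Deletion `𝔾 ∖ A` of a set `A` of edges: the flags of the edges of `A` are
removed, `s1` is closed up accordingly (walking on around the vertex past
deleted edge ends), and vertices losing all their flags become isolated
vertices. -/
def delete (A : Finset (Finset α)) : Ribbon α :=
  let keep := G.flags \ flagsOf A
  { flags := keep
    s0 := fun f => if f ∈ keep then G.s0 f else f
    s1 := fun f => if f ∈ keep then firstIn keep (fun g => G.s1 (G.s2 g)) (G.s1 f) else f
    s2 := fun f => if f ∈ keep then G.s2 f else f
    isolated := G.isolated ∪ G.vertexOrbits.filter (fun v => v ∩ keep = ∅) }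

/-- The spanning ribbon subgraph `𝔾|A := 𝔾 ∖ (E(𝔾) ∖ A)`. -/
def restrict (A : Finset (Finset α)) : Ribbon α :=
  G.delete (G.edgeSet \ A)

/-- Contraction `𝔾/A := (𝔾* ∖ A)*`. -/
def contract (A : Finset (Finset α)) : Ribbon α :=
  (G.dual.delete A).dual

/-- An edge is a loop if all its flags lie on a single vertex. -/
def IsLoop (e : Finset α) : Prop :=
  e ∈ G.edgeSet ∧ ∀ f ∈ e, ∀ g ∈ e, Orb G.flags [G.s1, G.s2] f g

/-- An edge is a bridge if deleting it increases the number of connected components. -/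
def IsBridge (e : Finset α) : Prop :=
  e ∈ G.edgeSet ∧ (G.delete {e}).numK > G.numK

/-- A loop is plane if contracting it increases the number of connected components. -/
def IsPlaneLoop (e : Finset α) : Prop :=
  G.IsLoop e ∧ (G.contract {e}).numK > G.numK

/-- A loop is non-orientable if together with its vertex it forms a Möbius band,
i.e. the union of the vertex disc and the edge has a single boundary component. -/
def IsNonorientableLoop (e : Finset α) : Prop :=
  G.IsLoop e ∧
    (((G.restrict {e}).bSet).filter (fun b => ∃ f ∈ b, f ∈ e)).card = 1

/-- Two loops at the same vertex are interlaced if, travelling around the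
boundary of the vertex (the cyclic order of edge ends being given by iterating
`s2 ∘ s1`), their ends are met in the cyclic order `e f e f`: between two
consecutive ends of `e` lies exactly one end of `f`. -/
def Interlaced (e f : Finset α) : Prop :=
  e ≠ f ∧ G.IsLoop e ∧ G.IsLoop f ∧
  (∃ x ∈ e, ∃ y ∈ f, Orb G.flags [G.s1, G.s2] x y) ∧
  ∃ x ∈ e, ∃ m : ℕ, 0 < m ∧ (fun g => G.s2 (G.s1 g))^[m] x ∈ e ∧
    (∀ k, 0 < k → k < m → (fun g => G.s2 (G.s1 g))^[k] x ∉ e) ∧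
    (∃! j, 0 < j ∧ j < m ∧ (fun g => G.s2 (G.s1 g))^[j] x ∈ f)

/-- The quasi-trees of `𝔾`, recorded by their edge sets: the edge sets of the
spanning ribbon subgraphs having exactly one boundary component. -/
def quasiTrees : Finset (Finset (Finset α)) :=
  G.edgeSet.powerset.filter (fun A => (G.restrict A).numB = 1)

/-- `e` links `f` with respect to the quasi-tree with edge set `Q` if `e` and
`f` are interlaced loops in the partial dual `𝔾^{E(Q)}`. -/
def Links (Q : Finset (Finset α)) (e f : Finset α) : Prop :=
  (G.partialDual Q).Interlaced e f

/-- An edge is live w.r.t. `Q` if it links no `lt`-smaller edge; otherwise it is dead. -/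
def Live (lt : Finset α → Finset α → Prop) (Q : Finset (Finset α)) (e : Finset α) : Prop :=
  ∀ f ∈ G.edgeSet, lt f e → ¬ G.Links Q e f

/-- An edge is non-orientable w.r.t. `Q` if it is a non-orientable loop in `𝔾^{E(Q)}`. -/
def NonorientableWrt (Q : Finset (Finset α)) (e : Finset α) : Prop :=
  (G.partialDual Q).IsNonorientableLoop e

/-- `D_Q`: the set of internally dead edges. -/
def DInt (lt : Finset α → Finset α → Prop) (Q : Finset (Finset α)) : Finset (Finset α) :=
  Q.filter (fun e => ¬ G.Live lt Q e)

/-- `D_Q^*`: the set of externally dead edges. -/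
def DExt (lt : Finset α → Finset α → Prop) (Q : Finset (Finset α)) : Finset (Finset α) :=
  (G.edgeSet \ Q).filter (fun e => ¬ G.Live lt Q e)

/-- `O_Q`: the set of internally live orientable edges. -/
def OInt (lt : Finset α → Finset α → Prop) (Q : Finset (Finset α)) : Finset (Finset α) :=
  Q.filter (fun e => G.Live lt Q e ∧ ¬ G.NonorientableWrt Q e)

/-- `O_Q^*`: the set of externally live orientable edges. -/
def OExt (lt : Finset α → Finset α → Prop) (Q : Finset (Finset α)) : Finset (Finset α) :=
  (G.edgeSet \ Q).filter (fun e => G.Live lt Q e ∧ ¬ G.NonorientableWrt Q e)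

/-- `N_Q`: the set of internally live non-orientable edges. -/
def NInt (lt : Finset α → Finset α → Prop) (Q : Finset (Finset α)) : Finset (Finset α) :=
  Q.filter (fun e => G.Live lt Q e ∧ G.NonorientableWrt Q e)

/-- `N_Q^*`: the set of externally live non-orientable edges. -/
def NExt (lt : Finset α → Finset α → Prop) (Q : Finset (Finset α)) : Finset (Finset α) :=
  (G.edgeSet \ Q).filter (fun e => G.Live lt Q e ∧ G.NonorientableWrt Q e)

end Ribbon

variable {α : Type}

/-- Adjacency of two blocks of a partition through an edge in `A`:
the edge has an end (a member of the block, i.e. a vertex or boundary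
component, meeting the edge's flags) in each block. -/
def padj (A : Finset (Finset α)) (B C : Finset (Finset α)) : Prop :=
  ∃ e ∈ A, (∃ v ∈ B, (v ∩ e).Nonempty) ∧ (∃ v ∈ C, (v ∩ e).Nonempty)

/-- The connected components of the packaging `G(𝔾|A;𝒱)`: the multigraph with
vertex set the blocks of `VP` and one edge per edge in `A`. -/
def pcomps (VP : Finset (Finset (Finset α))) (A : Finset (Finset α)) :
    Finset (Finset (Finset (Finset α))) :=
  VP.image (fun B => VP.filter (fun C => Relation.EqvGen (padj A) B C))

/-- The nullity `n = e − v + k` of the packaging `G(𝔾|A;𝒱)`. -/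
def pnull (VP : Finset (Finset (Finset α))) (A : Finset (Finset α)) : ℕ :=
  A.card + (pcomps VP A).card - VP.card

/-- The edges of `A` incident with the set of blocks `K`. -/
def edgesOf (A : Finset (Finset α)) (K : Finset (Finset (Finset α))) : Finset (Finset α) :=
  A.filter (fun e => ∃ B ∈ K, ∃ v ∈ B, (v ∩ e).Nonempty)

/-- `b(𝔾[K])`: the number of boundary components of the ribbon subgraph of `𝔾`
induced by the blocks in `K`, whose edge set is `EK`: the boundary components of
`𝔾|EK` consisting of flags of `EK`, plus one for each vertex lying in a block of
`K` and carrying no flag of an edge of `EK`. -/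
def bInd (G : Ribbon α) (K : Finset (Finset (Finset α))) (EK : Finset (Finset α)) : ℕ :=
  (((G.restrict EK).bSet).filter (fun b => ∃ f ∈ b, f ∈ Ribbon.flagsOf EK)).card +
  ((K.biUnion id).filter (fun v => v ∩ Ribbon.flagsOf EK = ∅)).card

/-- `γ(𝔾,K) = 2k(K) + e(K) − v(K) + ω(K) − b(𝔾[K])` for a set `K` of blocks of a
weighted partition, with incident edge set `EK`. -/
def gammaC (G : Ribbon α) (w : Finset (Finset α) → ℕ)
    (K : Finset (Finset (Finset α))) (EK : Finset (Finset α)) : ℤ :=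
  2 * ((pcomps K EK).card : ℤ) + (EK.card : ℤ) - (K.card : ℤ) +
    (∑ B ∈ K, (w B : ℤ)) - (bInd G K EK : ℤ)

/-- A packaged ribbon graph `𝔾̲ = (𝔾,𝒱,ω_𝒱,ℬ,ω_ℬ)`: a ribbon graph together with
a weighted partition of its vertex set and a weighted partition of its set of
boundary components. -/
structure PRibbon (α : Type) where
  G : Ribbon α
  VP : Finset (Finset (Finset α))
  wV : Finset (Finset α) → ℕ
  BP : Finset (Finset (Finset α))
  wB : Finset (Finset α) → ℕ

/-- `Bl` is a partition of `S`. -/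
def IsPartition {β : Type} (Bl : Finset (Finset β)) (S : Finset β) : Prop :=
  (∀ b ∈ Bl, b.Nonempty) ∧ Bl.biUnion id = S ∧
  (∀ b ∈ Bl, ∀ c ∈ Bl, b ≠ c → Disjoint b c)

/-- The conditions for a packaged ribbon graph to be genuine. -/
def PRibbon.IsPacked (P : PRibbon α) : Prop :=
  P.G.IsRibbon ∧ IsPartition P.VP P.G.vertexSet ∧ IsPartition P.BP P.G.bSet

/-- The packaged surface Tutte polynomial `T(𝔾̲;x,y)`, evaluated in a commutative
ring at values `x`, `y` and `xv i`, `yv i` for the variables `x_i, y_i` (`i ∈ ℤ`):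
`T(𝔾̲;x,y) = ∑_{A⊆E} x^{n(G(𝔾*|Aᶜ;ℬ))} y^{n(G(𝔾|A;𝒱))}
∏_H x_{γ(𝔾*,H)} ∏_K y_{γ(𝔾,K)}`. -/
def pst {R : Type} [CommRing R] (P : PRibbon α) (x y : R) (xv yv : ℤ → R) : R :=
  ∑ A ∈ P.G.edgeSet.powerset,
    x ^ pnull P.BP (P.G.edgeSet \ A) * y ^ pnull P.VP A *
    (∏ H ∈ pcomps P.BP (P.G.edgeSet \ A),
        xv (gammaC P.G.dual P.wB H (edgesOf (P.G.edgeSet \ A) H))) *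
    ∏ K ∈ pcomps P.VP A, yv (gammaC P.G P.wV K (edgesOf A K))

namespace PRibbon

/-- Transport of a block along deletion/contraction: the members of the new
vertex (or boundary component) set contained in a member of the old block. -/
def transport (S : Finset (Finset α)) (Blk : Finset (Finset α)) : Finset (Finset α) :=
  S.filter (fun v' => ∃ v ∈ Blk, v' ⊆ v)

/-- Packaged deletion `𝔾̲ ∖ e`: delete `e` from the ribbon graph, keep the vertex
partition and its weights, and in the boundary partition merge the block(s)
meeting `e` with the newly created boundary component(s): if two distinct blocks
were met, the merged block gets the sum of their weights, and otherwise the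
weight of the old block increases by `1`; all other blocks and weights are
unchanged. -/
def del (P : PRibbon α) (e : Finset α) : PRibbon α :=
  let G' := P.G.delete {e}
  let S := P.G.bSet.filter (fun b => (b ∩ e).Nonempty)
  let Blks := P.BP.filter (fun Blk => ∃ b ∈ Blk, (b ∩ e).Nonempty)
  let merged := (Blks.biUnion id ∪ (G'.bSet \ P.G.bSet)) \ S
  { G := G'
    VP := P.VP.image (transport G'.vertexSet)
    wV := fun B' => ∑ Blk ∈ P.VP.filter (fun Blk => transport G'.vertexSet Blk = B'), P.wV Blk
    BP := (P.BP \ Blks) ∪ {merged}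
    wB := fun B' =>
      if B' = merged then
        (if Blks.card = 2 then ∑ Blk ∈ Blks, P.wB Blk else (∑ Blk ∈ Blks, P.wB Blk) + 1)
      else P.wB B' }

/-- Packaged contraction `𝔾̲ / e`: contract `e` in the ribbon graph, keep the
boundary partition and its weights under the natural correspondence of boundary
components, and in the vertex partition merge the block(s) meeting `e` with the
newly created vertex (or vertices): if two distinct blocks were met, the merged
block gets the sum of their weights, and otherwise the weight of the old block
increases by `1`; all other blocks and weights are unchanged. -/
def con (P : PRibbon α) (e : Finset α) : PRibbon α :=
  let G' := P.G.contract {e}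
  let S := P.G.vertexSet.filter (fun v => (v ∩ e).Nonempty)
  let Blks := P.VP.filter (fun Blk => ∃ v ∈ Blk, (v ∩ e).Nonempty)
  let merged := (Blks.biUnion id ∪ (G'.vertexSet \ P.G.vertexSet)) \ S
  { G := G'
    VP := (P.VP \ Blks) ∪ {merged}
    wV := fun B' =>
      if B' = merged then
        (if Blks.card = 2 then ∑ Blk ∈ Blks, P.wV Blk else (∑ Blk ∈ Blks, P.wV Blk) + 1)
      else P.wV B'
    BP := P.BP.image (transport G'.bSet)
    wB := fun B' => ∑ Blk ∈ P.BP.filter (fun Blk => transport G'.bSet Blk = B'), P.wB Blk }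

/-- Deletion of a set of edges, one edge at a time. -/
def delSet (P : PRibbon α) (A : Finset (Finset α)) : PRibbon α :=
  A.toList.foldl PRibbon.del P

/-- Contraction of a set of edges, one edge at a time. -/
def conSet (P : PRibbon α) (A : Finset (Finset α)) : PRibbon α :=
  A.toList.foldl PRibbon.con P

end PRibbon

/-- The generalised Krushkal polynomial `P(𝔾;α,β,a,b)`, evaluated in a field at
`al = α`, `be = β` and at square roots `sa, sb` of `a, b`
(so that `a^{γ/2} = sa^γ` and `b^{γ/2} = sb^γ`):
`P(𝔾;α,β,a,b) = ∑_{A⊆E} α^{k(𝔾|A)−k(𝔾)} β^{k(𝔾*|Aᶜ)−k(𝔾*)} a^{γ(𝔾|A)/2} b^{γ(𝔾*|Aᶜ)/2}`. -/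
def krushkal {R : Type} [Field R] (G : Ribbon α) (al be sa sb : R) : R :=
  ∑ A ∈ G.edgeSet.powerset,
    al ^ ((G.restrict A).numK - G.numK) *
    be ^ ((G.dual.restrict (G.edgeSet \ A)).numK - G.dual.numK) *
    sa ^ (G.restrict A).eulerGenus *
    sb ^ (G.dual.restrict (G.edgeSet \ A)).eulerGenus

/-- Adjacency of two vertices of an abstract multigraph through an edge of `E`,
for a given incidence relation. -/
def relAdj {β ε : Type} (E : Finset ε) (inc : β → ε → Prop) (u v : β) : Prop :=
  ∃ e ∈ E, inc u e ∧ inc v e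

/-- The number `k(G|A)` of connected components of the spanning subgraph with
edge set `A` of the multigraph with vertex set `V` and incidence relation `inc`. -/
def kRel {β ε : Type} (V : Finset β) (A : Finset ε) (inc : β → ε → Prop) : ℕ :=
  (V.image (fun u => V.filter (fun v => Relation.EqvGen (relAdj A inc) u v))).card

/-- The Tutte polynomial `T(G;x,y) = ∑_{A⊆E} (x−1)^{k(G|A)−k(G)} (y−1)^{n(G|A)}`
of the multigraph with vertex set `V`, edge set `E` and incidence relation
`inc`, where `n(G|A) = |A| − v(G) + k(G|A)`. -/
def tutteRel {β ε : Type} {R : Type} [CommRing R]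
    (V : Finset β) (E : Finset ε) (inc : β → ε → Prop) (x y : R) : R :=
  ∑ A ∈ E.powerset,
    (x - 1) ^ (kRel V A inc - kRel V E inc) * (y - 1) ^ (A.card + kRel V A inc - V.card)

/-- Incidence between a connected component `u` of a ribbon subgraph of `G`
(or an isolated-vertex label) and an edge `e` of `G`: `e` has a flag lying on a
vertex of `G` meeting `u`. -/
def incCompG (G : Ribbon α) (u e : Finset α) : Prop :=
  ∃ f ∈ e, ∃ g ∈ u, Ribbon.Orb G.flags [G.s1, G.s2] f g

end QTE

namespace QTE

variable {α : Type}

lemma mem_orbitOf_self {F : Finset α} {fs : List (α → α)} {x : α} (hx : x ∈ F) :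
    x ∈ Ribbon.orbitOf F fs x := by
  simp only [Ribbon.orbitOf, Finset.mem_filter]
  exact ⟨hx, Relation.EqvGen.refl x⟩

lemma orbitOf_subset {F : Finset α} {fs : List (α → α)} {x : α} :
    Ribbon.orbitOf F fs x ⊆ F := Finset.filter_subset _ _

lemma flagsOf_orbits (F : Finset α) (fs : List (α → α)) :
    Ribbon.flagsOf (Ribbon.orbits F fs) = F := by
  ext y
  simp only [Ribbon.flagsOf, Ribbon.orbits, Finset.mem_biUnion, Finset.mem_image, id]
  constructor
  · rintro ⟨O, ⟨x, hx, rfl⟩, hy⟩; exact orbitOf_subset hy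
  · intro hy; exact ⟨_, ⟨y, hy, rfl⟩, mem_orbitOf_self hy⟩

lemma orbitOf_closed {F : Finset α} {fs : List (α → α)} {x y : α} {s : α → α}
    (hy : y ∈ Ribbon.orbitOf F fs x) (hs : s ∈ fs) (hsF : s y ∈ F) :
    s y ∈ Ribbon.orbitOf F fs x := by
  simp only [Ribbon.orbitOf, Finset.mem_filter] at hy ⊢
  exact ⟨hsF, Relation.EqvGen.trans _ _ _ hy.2
    (Relation.EqvGen.rel _ _ ⟨hy.1, hsF, s, hs, rfl⟩)⟩

lemma iter_agree {keep S : Finset α} {f g : α → α} {a : α} (ha : a ∈ S)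
    (h : ∀ x ∈ S, x ∉ keep → f x = g x ∧ f x ∈ S) :
    ∀ k, (∀ j < k, f^[j] a ∉ keep) → f^[k] a = g^[k] a ∧ f^[k] a ∈ S := by
  intro k
  induction k with
  | zero => exact fun _ => ⟨rfl, ha⟩
  | succ n ih =>
    intro hj
    have h1 := ih (fun j hjn => hj j (Nat.lt_succ_of_lt hjn))
    have hn : f^[n] a ∉ keep := hj n (Nat.lt_succ_self n)
    have h2 := h _ h1.2 hn
    rw [Function.iterate_succ_apply', Function.iterate_succ_apply', ← h1.1]
    exact h2

lemma firstIn_congr {keep S : Finset α} {f g : α → α} {a : α} (ha : a ∈ S)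
    (h : ∀ x ∈ S, x ∉ keep → f x = g x ∧ f x ∈ S) :
    Ribbon.firstIn keep f a = Ribbon.firstIn keep g a := by
  have h' : ∀ x ∈ S, x ∉ keep → g x = f x ∧ g x ∈ S := fun x hx hk =>
    ⟨(h x hx hk).1.symm, (h x hx hk).1 ▸ (h x hx hk).2⟩
  unfold Ribbon.firstIn
  by_cases hf : ∃ k, f^[k] a ∈ keep
  · have kf := Nat.find_spec hf
    have hmin : ∀ j < Nat.find hf, f^[j] a ∉ keep := fun j hj => Nat.find_min hf hj
    have hag : ∀ j ≤ Nat.find hf, f^[j] a = g^[j] a :=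
      fun j hj => (iter_agree ha h j (fun i hi => hmin i (lt_of_lt_of_le hi hj))).1
    have hg : ∃ k, g^[k] a ∈ keep := ⟨Nat.find hf, (hag _ le_rfl) ▸ kf⟩
    rw [dif_pos hf, dif_pos hg]
    have heq : Nat.find hg = Nat.find hf := by
      apply le_antisymm
      · exact Nat.find_le ((hag _ le_rfl) ▸ kf)
      · by_contra hlt
        push_neg at hlt
        exact hmin _ hlt ((hag _ (le_of_lt hlt)) ▸ Nat.find_spec hg)
    rw [heq, hag _ le_rfl]
  · have hg : ¬ ∃ k, g^[k] a ∈ keep := by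
      intro hg
      have hspec := Nat.find_spec hg
      have hmin : ∀ j < Nat.find hg, g^[j] a ∉ keep := fun j hj => Nat.find_min hg hj
      have he := (iter_agree ha h' (Nat.find hg) hmin).1
      exact hf ⟨Nat.find hg, he ▸ hspec⟩
    rw [dif_neg hf, dif_neg hg]

lemma orb_transfer {F S : Finset α} {t h1 h2 : α → α}
    (hcl : ∀ y ∈ S, y ∈ F ∧ t y ∈ S ∧ h1 y ∈ S ∧ h1 y = h2 y)
    (hinv : ∀ y ∈ F, t (t y) = y ∧ h1 (h1 y) = y) :
    ∀ y z, Ribbon.Orb F [t, h1] y z →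
      ((y ∈ S → z ∈ S ∧ Ribbon.Orb F [t, h2] y z) ∧
       (z ∈ S → y ∈ S ∧ Ribbon.Orb F [t, h2] y z)) := by
  intro y z h
  induction h with
  | rel a b hab =>
    obtain ⟨haF, hbF, s, hs, hsab⟩ := hab
    simp only [List.mem_cons, List.not_mem_nil, or_false] at hs
    constructor
    · intro haS
      obtain ⟨_, htS, hhS, hh⟩ := hcl a haS
      rcases hs with rfl | rfl
      · subst hsab
        exact ⟨htS, Relation.EqvGen.rel _ _ ⟨haF, hbF, s, by simp, rfl⟩⟩
      · subst hsab
        exact ⟨hhS, Relation.EqvGen.rel _ _ ⟨haF, hbF, h2, by simp, hh.symm⟩⟩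
    · intro hbS
      obtain ⟨hbF', htS, hhS, hh⟩ := hcl b hbS
      rcases hs with rfl | rfl
      · subst hsab
        have haS : a ∈ S := by rwa [(hinv a haF).1] at htS
        exact ⟨haS, Relation.EqvGen.rel _ _ ⟨haF, hbF, s, by simp, rfl⟩⟩
      · subst hsab
        have haS : a ∈ S := by rwa [(hinv a haF).2] at hhS
        obtain ⟨_, _, _, hh'⟩ := hcl a haS
        exact ⟨haS, Relation.EqvGen.rel _ _ ⟨haF, hbF, h2, by simp, hh'.symm⟩⟩
  | refl a =>
    exact ⟨fun h => ⟨h, Relation.EqvGen.refl a⟩, fun h => ⟨h, Relation.EqvGen.refl a⟩⟩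
  | symm a b _ ih =>
    exact ⟨fun h => ⟨(ih.2 h).1, Relation.EqvGen.symm _ _ (ih.2 h).2⟩,
           fun h => ⟨(ih.1 h).1, Relation.EqvGen.symm _ _ (ih.1 h).2⟩⟩
  | trans a b c _ _ ih1 ih2 =>
    refine ⟨fun h => ?_, fun h => ?_⟩
    · obtain ⟨hb, hab⟩ := ih1.1 h
      obtain ⟨hc, hbc⟩ := ih2.1 hb
      exact ⟨hc, Relation.EqvGen.trans _ _ _ hab hbc⟩
    · obtain ⟨hb, hbc⟩ := ih2.2 h
      obtain ⟨ha, hab⟩ := ih1.2 hb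
      exact ⟨ha, Relation.EqvGen.trans _ _ _ hab hbc⟩

lemma orbitOf_transfer {F : Finset α} {t h1 h2 : α → α} {x : α} (hx : x ∈ F)
    (htF : ∀ y ∈ F, t y ∈ F) (hh1F : ∀ y ∈ F, h1 y ∈ F)
    (hinv : ∀ y ∈ F, t (t y) = y ∧ h1 (h1 y) = y ∧ h2 (h2 y) = y)
    (hagree : ∀ y ∈ Ribbon.orbitOf F [t, h1] x, h1 y = h2 y) :
    Ribbon.orbitOf F [t, h2] x = Ribbon.orbitOf F [t, h1] x := by
  have hxS : x ∈ Ribbon.orbitOf F [t, h1] x := mem_orbitOf_self hx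
  set S := Ribbon.orbitOf F [t, h1] x with hS
  have hcl : ∀ y ∈ S, y ∈ F ∧ t y ∈ S ∧ h1 y ∈ S ∧ h1 y = h2 y := by
    intro y hy
    have hyF : y ∈ F := orbitOf_subset hy
    exact ⟨hyF, orbitOf_closed hy (by simp) (htF y hyF),
      orbitOf_closed hy (by simp) (hh1F y hyF), hagree y hy⟩
  have hcl' : ∀ y ∈ S, y ∈ F ∧ t y ∈ S ∧ h2 y ∈ S ∧ h2 y = h1 y := by
    intro y hy
    obtain ⟨hyF, htS, hhS, hh⟩ := hcl y hy
    exact ⟨hyF, htS, hh ▸ hhS, hh.symm⟩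
  have hinv1 : ∀ y ∈ F, t (t y) = y ∧ h1 (h1 y) = y :=
    fun y hy => ⟨(hinv y hy).1, (hinv y hy).2.1⟩
  have hinv2 : ∀ y ∈ F, t (t y) = y ∧ h2 (h2 y) = y :=
    fun y hy => ⟨(hinv y hy).1, (hinv y hy).2.2⟩
  ext y
  rw [hS]
  simp only [Ribbon.orbitOf, Finset.mem_filter]
  constructor
  · rintro ⟨hyF, horb⟩
    have h := (orb_transfer hcl' hinv2 x y horb).1 hxS
    rw [hS] at h
    simp only [Ribbon.orbitOf, Finset.mem_filter] at h
    exact ⟨hyF, h.1.2⟩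
  · rintro ⟨hyF, horb⟩
    have hyS : y ∈ S := by
      rw [hS]; simp only [Ribbon.orbitOf, Finset.mem_filter]; exact ⟨hyF, horb⟩
    exact ⟨hyF, ((orb_transfer hcl hinv1 x y horb).1 hxS).2⟩

lemma flagsOf_closed {G : Ribbon α} (hG : G.IsRibbon) {A : Finset (Finset α)}
    (hA : A ⊆ G.edgeSet) :
    ∀ y ∈ Ribbon.flagsOf A,
      y ∈ G.flags ∧ G.s0 y ∈ Ribbon.flagsOf A ∧ G.s2 y ∈ Ribbon.flagsOf A := by
  intro y hy
  simp only [Ribbon.flagsOf, Finset.mem_biUnion, id] at hy ⊢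
  obtain ⟨e, heA, hye⟩ := hy
  have heE := hA heA
  simp only [Ribbon.edgeSet, Ribbon.orbits, Finset.mem_image] at heE
  obtain ⟨x, hxF, rfl⟩ := heE
  have hyF : y ∈ G.flags := orbitOf_subset hye
  refine ⟨hyF, ⟨_, heA, orbitOf_closed hye (by simp) (hG.1 y hyF).1⟩,
    ⟨_, heA, orbitOf_closed hye (by simp) (hG.1 y hyF).2.2⟩⟩
lemma Ribbon.ext' {G H : Ribbon α} (h1 : G.flags = H.flags) (h2 : G.s0 = H.s0)
    (h3 : G.s1 = H.s1) (h4 : G.s2 = H.s2) (h5 : G.isolated = H.isolated) : G = H := by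
  cases G; cases H; simp_all

lemma delete_flags (G : Ribbon α) (A : Finset (Finset α)) :
    (G.delete A).flags = G.flags \ Ribbon.flagsOf A := rfl
lemma delete_s0 (G : Ribbon α) (A : Finset (Finset α)) :
    (G.delete A).s0 = fun f => if f ∈ G.flags \ Ribbon.flagsOf A then G.s0 f else f := rfl
lemma delete_s1 (G : Ribbon α) (A : Finset (Finset α)) :
    (G.delete A).s1 = fun f => if f ∈ G.flags \ Ribbon.flagsOf A then
      Ribbon.firstIn (G.flags \ Ribbon.flagsOf A) (fun g => G.s1 (G.s2 g)) (G.s1 f) else f := rfl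
lemma delete_s2 (G : Ribbon α) (A : Finset (Finset α)) :
    (G.delete A).s2 = fun f => if f ∈ G.flags \ Ribbon.flagsOf A then G.s2 f else f := rfl
lemma delete_isolated (G : Ribbon α) (A : Finset (Finset α)) :
    (G.delete A).isolated = G.isolated ∪ G.vertexOrbits.filter
      (fun v => v ∩ (G.flags \ Ribbon.flagsOf A) = ∅) := rfl

lemma pd_flags (G : Ribbon α) (A : Finset (Finset α)) : (G.partialDual A).flags = G.flags := rfl
lemma pd_s0 (G : Ribbon α) (A : Finset (Finset α)) :
    (G.partialDual A).s0 = fun f => if f ∈ G.flags then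
      (if f ∈ Ribbon.flagsOf A then G.s2 f else G.s0 f) else f := rfl
lemma pd_s1 (G : Ribbon α) (A : Finset (Finset α)) : (G.partialDual A).s1 = G.s1 := rfl
lemma pd_s2 (G : Ribbon α) (A : Finset (Finset α)) :
    (G.partialDual A).s2 = fun f => if f ∈ G.flags then
      (if f ∈ Ribbon.flagsOf A then G.s0 f else G.s2 f) else f := rfl
lemma pd_isolated (G : Ribbon α) (A : Finset (Finset α)) :
    (G.partialDual A).isolated = G.isolated := rfl

lemma orbits_filter_subset {F keep : Finset α} {t h1 h2 : α → α}
    (htF : ∀ y ∈ F, t y ∈ F) (hh1F : ∀ y ∈ F, h1 y ∈ F)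
    (hinv : ∀ y ∈ F, t (t y) = y ∧ h1 (h1 y) = y ∧ h2 (h2 y) = y)
    (hagree : ∀ y ∈ F, y ∉ keep → h1 y = h2 y) :
    (Ribbon.orbits F [t, h1]).filter (fun v => v ∩ keep = ∅) ⊆
    (Ribbon.orbits F [t, h2]).filter (fun v => v ∩ keep = ∅) := by
  intro O hO
  simp only [Finset.mem_filter, Ribbon.orbits, Finset.mem_image] at hO ⊢
  obtain ⟨⟨x, hx, rfl⟩, hP⟩ := hO
  have hsub : ∀ y ∈ Ribbon.orbitOf F [t, h1] x, y ∉ keep := fun y hy hk =>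
    (Finset.eq_empty_iff_forall_notMem.1 hP y) (Finset.mem_inter.2 ⟨hy, hk⟩)
  have heq := orbitOf_transfer hx htF hh1F hinv
    (fun y hy => hagree y (orbitOf_subset hy) (hsub y hy))
  exact ⟨⟨x, hx, heq⟩, hP⟩

lemma orbits_filter_eq {F keep : Finset α} {t h1 h2 : α → α}
    (htF : ∀ y ∈ F, t y ∈ F) (hh1F : ∀ y ∈ F, h1 y ∈ F) (hh2F : ∀ y ∈ F, h2 y ∈ F)
    (hinv : ∀ y ∈ F, t (t y) = y ∧ h1 (h1 y) = y ∧ h2 (h2 y) = y)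
    (hagree : ∀ y ∈ F, y ∉ keep → h1 y = h2 y) :
    (Ribbon.orbits F [t, h1]).filter (fun v => v ∩ keep = ∅) =
    (Ribbon.orbits F [t, h2]).filter (fun v => v ∩ keep = ∅) :=
  Finset.Subset.antisymm
    (orbits_filter_subset htF hh1F hinv hagree)
    (orbits_filter_subset htF hh2F
      (fun y hy => ⟨(hinv y hy).1, (hinv y hy).2.2, (hinv y hy).2.1⟩)
      (fun y hy hk => (hagree y hy hk).symm))
/-- For every ribbon graph `𝔾` and every subset `A ⊆ E(𝔾)`,
contraction equals partial duality followed by deletion: `𝔾/A = 𝔾^A ∖ A`. -/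
theorem contract_eq_partialDual_delete {α : Type} (G : Ribbon α) (hG : G.IsRibbon)
    (A : Finset (Finset α)) (hA : A ⊆ G.edgeSet) :
    G.contract A = (G.partialDual A).delete A := by
  obtain ⟨hmap, hinvo, hout, hcomm, hfp⟩ := hG
  have hFAcl := flagsOf_closed ⟨hmap, hinvo, hout, hcomm, hfp⟩ hA
  apply Ribbon.ext'
  · rfl
  · funext f
    simp only [Ribbon.contract, Ribbon.dual, Ribbon.edgeSet, pd_s0, pd_s2, pd_flags,
      delete_s0, delete_s2, delete_flags, flagsOf_orbits]
    by_cases hf : f ∈ G.flags \ Ribbon.flagsOf A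
    · have hf1 : f ∈ G.flags := (Finset.mem_sdiff.1 hf).1
      have hf2 : f ∉ Ribbon.flagsOf A := (Finset.mem_sdiff.1 hf).2
      simp [hf, hf1, hf2]
    · simp [hf]
  · funext f
    simp only [Ribbon.contract, Ribbon.dual, Ribbon.edgeSet, pd_s1, pd_s0, pd_s2, pd_flags,
      delete_s1, delete_flags, flagsOf_orbits]
    by_cases hf : f ∈ G.flags \ Ribbon.flagsOf A
    · have hf1 : f ∈ G.flags := (Finset.mem_sdiff.1 hf).1
      simp only [hf, if_true]
      apply firstIn_congr (S := G.flags) ((hmap f hf1).2.1)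
      intro x hx hk
      have hxFA : x ∈ Ribbon.flagsOf A := by
        by_contra hc; exact hk (Finset.mem_sdiff.2 ⟨hx, hc⟩)
      have h0F : G.s0 x ∈ G.flags := (hmap x hx).1
      refine ⟨by simp [hx, hxFA], ?_⟩
      simp only [hx, hxFA, if_true]
      exact (hmap _ h0F).2.1
    · simp [hf]
  · funext f
    simp only [Ribbon.contract, Ribbon.dual, Ribbon.edgeSet, pd_s0, pd_s2, pd_flags,
      delete_s0, delete_s2, delete_flags, flagsOf_orbits]
    by_cases hf : f ∈ G.flags \ Ribbon.flagsOf A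
    · have hf1 : f ∈ G.flags := (Finset.mem_sdiff.1 hf).1
      have hf2 : f ∉ Ribbon.flagsOf A := (Finset.mem_sdiff.1 hf).2
      simp [hf, hf1, hf2]
    · simp [hf]
  · simp only [Ribbon.contract, Ribbon.dual, Ribbon.edgeSet, pd_isolated, pd_s1, pd_s0,
      pd_s2, pd_flags, delete_isolated, delete_flags, Ribbon.vertexOrbits, flagsOf_orbits]
    congr 1
    apply orbits_filter_eq
    · exact fun y hy => (hmap y hy).2.1
    · intro y hy; simp [hy]; exact (hmap y hy).1
    · intro y hy
      by_cases hyA : y ∈ Ribbon.flagsOf A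
      · simp [hy, hyA]; exact (hmap y hy).1
      · simp [hy, hyA]; exact (hmap y hy).2.2
    · intro y hy
      refine ⟨(hinvo y hy).2.1, ?_, ?_⟩
      · have h0F : G.s0 y ∈ G.flags := (hmap y hy).1
        simp [hy, h0F]; exact (hinvo y hy).1
      · by_cases hyA : y ∈ Ribbon.flagsOf A
        · have h0F : G.s0 y ∈ G.flags := (hmap y hy).1
          have h0A : G.s0 y ∈ Ribbon.flagsOf A := (hFAcl _ hyA).2.1
          simp [hy, hyA, h0F, h0A]; exact (hinvo y hy).1
        · have h2F : G.s2 y ∈ G.flags := (hmap y hy).2.2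
          have h2A : G.s2 y ∉ Ribbon.flagsOf A := by
            intro hc
            have := (hFAcl _ hc).2.2
            rw [(hinvo y hy).2.2] at this
            exact hyA this
          simp [hy, hyA, h2F, h2A]; exact (hinvo y hy).2.2
    · intro y hy hk
      have hyA : y ∈ Ribbon.flagsOf A := by
        by_contra hc; exact hk (Finset.mem_sdiff.2 ⟨hy, hc⟩)
      simp [hy, hyA]

end QTE
end
end

section
/- If 𝔾 is a connected ribbon graph and Q ∈ 𝒬_𝔾 is a quasi-tree, then the partial dual 𝔾^{E(Q)} has exactly one vertex. -/
/-!
Formalization of ribbon graphs in the flag (graph-encoded-map) presentation: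
a finite set of flags with three involutions `s0, s1, s2` such that `s0 ∘ s2 = s2 ∘ s0`
is fixed-point-free, together with a finite set of (labelled) isolated vertices.
Vertices are the orbits of `⟨s1,s2⟩` together with the isolated vertices, edges the
orbits of `⟨s0,s2⟩`, boundary components the orbits of `⟨s0,s1⟩` together with one per
isolated vertex, and connected components the orbits of `⟨s0,s1,s2⟩` together with the
isolated vertices.  On top of this we define partial duality, deletion, contraction,
quasi-trees and their activities, packaged ribbon graphs, the packaged surface Tutte
polynomial and the generalised Krushkal polynomial.
-/

open scoped Classical

noncomputable section

namespace QTE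

namespace Ribbon

variable {α : Type}

lemma orb_refl (F : Finset α) (fs : List (α → α)) (x : α) : Orb F fs x x :=
  Relation.EqvGen.refl x

lemma orb_symm {F : Finset α} {fs : List (α → α)} {x y : α} (h : Orb F fs x y) :
    Orb F fs y x := Relation.EqvGen.symm _ _ h

lemma orb_trans {F : Finset α} {fs : List (α → α)} {x y z : α}
    (h1 : Orb F fs x y) (h2 : Orb F fs y z) : Orb F fs x z :=
  Relation.EqvGen.trans _ _ _ h1 h2

lemma orb_step {F : Finset α} {fs : List (α → α)} {x y : α}
    (hx : x ∈ F) (hy : y ∈ F) (s : α → α) (hs : s ∈ fs) (h : s x = y) :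
    Orb F fs x y := Relation.EqvGen.rel _ _ ⟨hx, hy, s, hs, h⟩

lemma mem_orbitOf {F : Finset α} {fs : List (α → α)} {x y : α} :
    y ∈ orbitOf F fs x ↔ y ∈ F ∧ Orb F fs x y := by
  simp [orbitOf]

lemma mem_orbitOf_self {F : Finset α} {fs : List (α → α)} {x : α} (hx : x ∈ F) :
    x ∈ orbitOf F fs x := mem_orbitOf.mpr ⟨hx, orb_refl _ _ _⟩

lemma orbitOf_subset {F : Finset α} {fs : List (α → α)} {x : α} :
    orbitOf F fs x ⊆ F := Finset.filter_subset _ _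

lemma orbitOf_eq_of_orb {F : Finset α} {fs : List (α → α)} {x y : α}
    (h : Orb F fs x y) : orbitOf F fs x = orbitOf F fs y := by
  ext z
  simp only [mem_orbitOf]
  exact ⟨fun hz => ⟨hz.1, orb_trans (orb_symm h) hz.2⟩,
    fun hz => ⟨hz.1, orb_trans h hz.2⟩⟩

lemma orb_of_card_orbits_eq_one {F : Finset α} {fs : List (α → α)}
    (h : (orbits F fs).card = 1) {x y : α} (hx : x ∈ F) (hy : y ∈ F) :
    Orb F fs x y := by
  obtain ⟨O, hO⟩ := Finset.card_eq_one.mp h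
  have h1 : orbitOf F fs x = O := by
    have := Finset.mem_image_of_mem (orbitOf F fs) hx
    rw [show F.image (orbitOf F fs) = orbits F fs from rfl, hO, Finset.mem_singleton] at this
    exact this
  have h2 : orbitOf F fs y = O := by
    have := Finset.mem_image_of_mem (orbitOf F fs) hy
    rw [show F.image (orbitOf F fs) = orbits F fs from rfl, hO, Finset.mem_singleton] at this
    exact this
  have : y ∈ orbitOf F fs x := by rw [h1, ← h2]; exact mem_orbitOf_self hy
  exact (mem_orbitOf.mp this).2

lemma orbits_eq_singleton {F : Finset α} {fs : List (α → α)} (hne : F.Nonempty)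
    (h : ∀ x ∈ F, ∀ y ∈ F, Orb F fs x y) : orbits F fs = {F} := by
  have key : ∀ x ∈ F, orbitOf F fs x = F := fun x hx =>
    Finset.filter_eq_self.mpr (fun y hy => h x hx y hy)
  ext O
  simp only [orbits, Finset.mem_image, Finset.mem_singleton]
  constructor
  · rintro ⟨x, hx, rfl⟩; exact key x hx
  · rintro rfl; obtain ⟨x, hx⟩ := hne; exact ⟨x, hx, key x hx⟩

end Ribbon

end QTE

namespace QTE

open Ribbon

variable {α : Type}

/-- The kept flags when restricting to `Q`: flags of the edges in `Q`. -/
def QTkeep (G : Ribbon α) (Q : Finset (Finset α)) : Finset α :=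
  G.flags \ Ribbon.flagsOf (G.edgeSet \ Q)

lemma QT_edge_eq {G : Ribbon α} {e : Finset α} {x : α}
    (he : e ∈ G.edgeSet) (hx : x ∈ e) :
    e = Ribbon.orbitOf G.flags [G.s0, G.s2] x := by
  obtain ⟨a, _, rfl⟩ := Finset.mem_image.mp he
  exact orbitOf_eq_of_orb (mem_orbitOf.mp hx).2

lemma QT_keep_subset {G : Ribbon α} {Q : Finset (Finset α)} :
    QTkeep G Q ⊆ G.flags := Finset.sdiff_subset

lemma QT_mem_keep_iff {G : Ribbon α} {Q : Finset (Finset α)} (hsub : Q ⊆ G.edgeSet)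
    {x : α} (hx : x ∈ G.flags) :
    x ∈ QTkeep G Q ↔ x ∈ Ribbon.flagsOf Q := by
  constructor
  · intro hk
    have hnot : x ∉ Ribbon.flagsOf (G.edgeSet \ Q) := (Finset.mem_sdiff.mp hk).2
    set e := Ribbon.orbitOf G.flags [G.s0, G.s2] x with he
    have heE : e ∈ G.edgeSet := Finset.mem_image_of_mem _ hx
    have hxe : x ∈ e := mem_orbitOf_self hx
    by_cases hQ : e ∈ Q
    · exact Finset.mem_biUnion.mpr ⟨e, hQ, hxe⟩
    · exact absurd (Finset.mem_biUnion.mpr ⟨e, Finset.mem_sdiff.mpr ⟨heE, hQ⟩, hxe⟩) hnot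
  · intro hf
    obtain ⟨e, heQ, hxe⟩ := Finset.mem_biUnion.mp hf
    refine Finset.mem_sdiff.mpr ⟨hx, fun hcon => ?_⟩
    obtain ⟨e', he', hxe'⟩ := Finset.mem_biUnion.mp hcon
    have h1 : e = Ribbon.orbitOf G.flags [G.s0, G.s2] x := QT_edge_eq (hsub heQ) hxe
    have h2 : e' = Ribbon.orbitOf G.flags [G.s0, G.s2] x :=
      QT_edge_eq (Finset.sdiff_subset he') hxe'
    exact (Finset.mem_sdiff.mp he').2 (by rw [h2, ← h1]; exact heQ)

lemma QT_flagsOf_closed {G : Ribbon α} {Q : Finset (Finset α)} (hsub : Q ⊆ G.edgeSet)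
    {x y : α} (hx : x ∈ Ribbon.flagsOf Q) (hy : y ∈ G.flags)
    (h : Ribbon.Orb G.flags [G.s0, G.s2] x y) : y ∈ Ribbon.flagsOf Q := by
  obtain ⟨e, heQ, hxe⟩ := Finset.mem_biUnion.mp hx
  refine Finset.mem_biUnion.mpr ⟨e, heQ, ?_⟩
  rw [QT_edge_eq (hsub heQ) hxe]
  exact mem_orbitOf.mpr ⟨hy, h⟩

section Rlemmas

variable {G : Ribbon α} {Q : Finset (Finset α)}

/-- R-step: s1. -/
lemma QT_R_s1 (hG : G.IsRibbon) {x : α} (hx : x ∈ G.flags) :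
    Ribbon.Orb G.flags [(G.partialDual Q).s1, (G.partialDual Q).s2] x (G.s1 x) :=
  orb_step hx (hG.1 x hx).2.1 (G.partialDual Q).s1 (by simp) rfl

lemma QT_pd_s2_of_mem {x : α} (hx : x ∈ G.flags) (hxQ : x ∈ Ribbon.flagsOf Q) :
    (G.partialDual Q).s2 x = G.s0 x := by
  simp [Ribbon.partialDual, hx, hxQ]

lemma QT_pd_s2_of_notMem {x : α} (hx : x ∈ G.flags) (hxQ : x ∉ Ribbon.flagsOf Q) :
    (G.partialDual Q).s2 x = G.s2 x := by
  simp [Ribbon.partialDual, hx, hxQ]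

/-- R-step: s0 on kept flags. -/
lemma QT_R_s0 (hG : G.IsRibbon) {x : α} (hx : x ∈ G.flags) (hxQ : x ∈ Ribbon.flagsOf Q) :
    Ribbon.Orb G.flags [(G.partialDual Q).s1, (G.partialDual Q).s2] x (G.s0 x) :=
  orb_step hx (hG.1 x hx).1 (G.partialDual Q).s2 (by simp) (QT_pd_s2_of_mem hx hxQ)

/-- R-step: s2 on non-kept flags. -/
lemma QT_R_s2 (hG : G.IsRibbon) {x : α} (hx : x ∈ G.flags) (hxQ : x ∉ Ribbon.flagsOf Q) :
    Ribbon.Orb G.flags [(G.partialDual Q).s1, (G.partialDual Q).s2] x (G.s2 x) :=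
  orb_step hx (hG.1 x hx).2.2 (G.partialDual Q).s2 (by simp) (QT_pd_s2_of_notMem hx hxQ)

lemma QT_iter_mem (hG : G.IsRibbon) {a : α} (ha : a ∈ G.flags) (j : ℕ) :
    (fun g => G.s1 (G.s2 g))^[j] a ∈ G.flags := by
  induction j with
  | zero => exact ha
  | succ n ih =>
    rw [Function.iterate_succ_apply']
    exact (hG.1 _ (hG.1 _ ih).2.2).2.1

/-- Walking to the first kept flag stays in the same `R`-orbit. -/
lemma QT_R_firstIn (hG : G.IsRibbon) (hsub : Q ⊆ G.edgeSet) {a : α} (ha : a ∈ G.flags) :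
    Ribbon.Orb G.flags [(G.partialDual Q).s1, (G.partialDual Q).s2] a
      (Ribbon.firstIn (QTkeep G Q) (fun g => G.s1 (G.s2 g)) a) := by
  unfold Ribbon.firstIn
  split
  · next h =>
    set n := Nat.find h with hn
    have key : ∀ j, j ≤ n →
        Ribbon.Orb G.flags [(G.partialDual Q).s1, (G.partialDual Q).s2] a
          ((fun g => G.s1 (G.s2 g))^[j] a) := by
      intro j hj
      induction j with
      | zero => exact orb_refl _ _ _
      | succ m ih =>
        have hm : m < n := hj
        have ihm := ih (le_of_lt hm)
        set b := (fun g => G.s1 (G.s2 g))^[m] a with hb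
        have hbF : b ∈ G.flags := QT_iter_mem hG ha m
        have hbK : b ∉ QTkeep G Q := Nat.find_min h hm
        have hbQ : b ∉ Ribbon.flagsOf Q := fun hc =>
          hbK ((QT_mem_keep_iff hsub hbF).mpr hc)
        have h1 := QT_R_s2 (Q := Q) hG hbF hbQ
        have h2 := QT_R_s1 (Q := Q) hG (hG.1 b hbF).2.2
        rw [Function.iterate_succ_apply']
        exact orb_trans ihm (orb_trans h1 h2)
    exact key n le_rfl
  · exact orb_refl _ _ _

/-- Boundary relation of the restriction implies the vertex relation of the dual. -/
lemma QT_restrict_to_R (hG : G.IsRibbon) (hsub : Q ⊆ G.edgeSet) {x y : α}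
    (h : Ribbon.Orb (QTkeep G Q) [(G.restrict Q).s0, (G.restrict Q).s1] x y) :
    Ribbon.Orb G.flags [(G.partialDual Q).s1, (G.partialDual Q).s2] x y := by
  induction h with
  | rel u v huv =>
    obtain ⟨hu, hv, s, hs, hsu⟩ := huv
    have huF : u ∈ G.flags := QT_keep_subset hu
    have huQ : u ∈ Ribbon.flagsOf Q := (QT_mem_keep_iff hsub huF).mp hu
    simp only [List.mem_cons, List.mem_singleton, List.not_mem_nil, or_false] at hs
    rcases hs with rfl | rfl
    · have : (G.restrict Q).s0 u = G.s0 u := by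
        show (if u ∈ QTkeep G Q then G.s0 u else u) = G.s0 u
        simp [hu]
      rw [this] at hsu
      exact hsu ▸ QT_R_s0 hG huF huQ
    · have : (G.restrict Q).s1 u =
          Ribbon.firstIn (QTkeep G Q) (fun g => G.s1 (G.s2 g)) (G.s1 u) := by
        show (if u ∈ QTkeep G Q
            then Ribbon.firstIn (QTkeep G Q) (fun g => G.s1 (G.s2 g)) (G.s1 u) else u) = _
        rw [if_pos hu]
      rw [this] at hsu
      exact hsu ▸ orb_trans (QT_R_s1 hG huF) (QT_R_firstIn hG hsub (hG.1 u huF).2.1)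
  | refl u => exact orb_refl _ _ _
  | symm u v _ ih => exact orb_symm ih
  | trans u v w _ _ ih1 ih2 => exact orb_trans ih1 ih2

/-- The vertex relation of `G` implies the vertex relation of the dual, or both
endpoints reach a kept flag. -/
lemma QT_vertex_to_R (hG : G.IsRibbon) (hsub : Q ⊆ G.edgeSet) {x y : α}
    (h : Ribbon.Orb G.flags [G.s1, G.s2] x y) :
    Ribbon.Orb G.flags [(G.partialDual Q).s1, (G.partialDual Q).s2] x y ∨
      ((∃ z ∈ QTkeep G Q,
          Ribbon.Orb G.flags [(G.partialDual Q).s1, (G.partialDual Q).s2] x z) ∧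
       (∃ z ∈ QTkeep G Q,
          Ribbon.Orb G.flags [(G.partialDual Q).s1, (G.partialDual Q).s2] y z)) := by
  induction h with
  | rel u v huv =>
    obtain ⟨hu, hv, s, hs, hsu⟩ := huv
    simp only [List.mem_cons, List.mem_singleton, List.not_mem_nil, or_false] at hs
    rcases hs with rfl | rfl
    · exact Or.inl (hsu ▸ QT_R_s1 hG hu)
    · by_cases huQ : u ∈ Ribbon.flagsOf Q
      · refine Or.inr ⟨⟨u, (QT_mem_keep_iff hsub hu).mpr huQ, orb_refl _ _ _⟩,
          ⟨v, ?_, orb_refl _ _ _⟩⟩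
        have hvQ : v ∈ Ribbon.flagsOf Q := by
          refine QT_flagsOf_closed hsub huQ hv ?_
          exact orb_step hu hv G.s2 (by simp) hsu
        exact (QT_mem_keep_iff hsub hv).mpr hvQ
      · exact Or.inl (hsu ▸ QT_R_s2 hG hu huQ)
  | refl u => exact Or.inl (orb_refl _ _ _)
  | symm u v _ ih =>
    rcases ih with h | ⟨h1, h2⟩
    · exact Or.inl (orb_symm h)
    · exact Or.inr ⟨h2, h1⟩
  | trans u v w _ _ ih1 ih2 =>
    rcases ih1 with h1 | ⟨hu, hv⟩
    · rcases ih2 with h2 | ⟨hv', hw⟩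
      · exact Or.inl (orb_trans h1 h2)
      · obtain ⟨z, hz, hvz⟩ := hv'
        exact Or.inr ⟨⟨z, hz, orb_trans h1 hvz⟩, hw⟩
    · rcases ih2 with h2 | ⟨hv', hw⟩
      · obtain ⟨z, hz, hvz⟩ := hv
        exact Or.inr ⟨hu, ⟨z, hz, orb_trans (orb_symm h2) hvz⟩⟩
      · exact Or.inr ⟨hu, hw⟩

end Rlemmas

end QTE

namespace QTE

/-- If `𝔾` is a connected ribbon graph and `Q ∈ 𝒬_𝔾` is a
quasi-tree, then the partial dual `𝔾^{E(Q)}` has exactly one vertex. -/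
theorem partialDual_quasiTree_one_vertex {α : Type} (G : Ribbon α) (hG : G.IsRibbon)
    (hc : G.Connected) (Q : Finset (Finset α)) (hQ : Q ∈ G.quasiTrees) :
    (G.partialDual Q).numV = 1 := by
  obtain ⟨hQsub, hQb⟩ : Q ⊆ G.edgeSet ∧ (G.restrict Q).numB = 1 := by
    simpa only [Ribbon.quasiTrees, Finset.mem_filter, Finset.mem_powerset] using hQ
  have hQb' : (G.restrict Q).bSet.card = 1 := hQb
  have hbset : (G.restrict Q).bSet =
      Ribbon.orbits (QTkeep G Q) [(G.restrict Q).s0, (G.restrict Q).s1]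
        ∪ (G.isolated ∪ G.vertexOrbits.filter (fun v => v ∩ QTkeep G Q = ∅)) := rfl
  rcases (QTkeep G Q).eq_empty_or_nonempty with hK | hK
  · -- no kept flags: Q = ∅ and the partial dual is G itself
    have hQempty : Q = ∅ := by
      rw [Finset.eq_empty_iff_forall_notMem]
      intro e heQ
      obtain ⟨a, haF, rfl⟩ := Finset.mem_image.mp (hQsub heQ)
      have haQ : a ∈ Ribbon.flagsOf Q :=
        Finset.mem_biUnion.mpr ⟨_, heQ, Ribbon.mem_orbitOf_self haF⟩
      have := (QT_mem_keep_iff hQsub haF).mpr haQ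
      rw [hK] at this
      exact absurd this (Finset.notMem_empty a)
    have hfun : ∀ x ∈ G.flags, (G.partialDual Q).s2 x = G.s2 x := by
      intro x hx
      refine QT_pd_s2_of_notMem hx ?_
      simp [hQempty, Ribbon.flagsOf]
    have hstep : Ribbon.Step G.flags [(G.partialDual Q).s1, (G.partialDual Q).s2]
        = Ribbon.Step G.flags [G.s1, G.s2] := by
      funext x y
      apply propext
      constructor
      · rintro ⟨hx, hy, s, hs, rfl⟩
        simp only [List.mem_cons, List.not_mem_nil, or_false] at hs
        rcases hs with rfl | rfl
        · exact ⟨hx, hy, G.s1, by simp, rfl⟩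
        · exact ⟨hx, hy, G.s2, by simp, (hfun x hx).symm⟩
      · rintro ⟨hx, hy, s, hs, rfl⟩
        simp only [List.mem_cons, List.not_mem_nil, or_false] at hs
        rcases hs with rfl | rfl
        · exact ⟨hx, hy, (G.partialDual Q).s1, by simp, rfl⟩
        · exact ⟨hx, hy, (G.partialDual Q).s2, by simp, hfun x hx⟩
    have horb : (G.partialDual Q).vertexOrbits = G.vertexOrbits := by
      show Ribbon.orbits G.flags [(G.partialDual Q).s1, (G.partialDual Q).s2]
          = Ribbon.orbits G.flags [G.s1, G.s2]
      unfold Ribbon.orbits Ribbon.orbitOf Ribbon.Orb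
      rw [hstep]
    have hbs : (G.restrict Q).bSet = G.isolated ∪ G.vertexOrbits := by
      rw [hbset, hK]
      simp [Ribbon.orbits]
    have hnv : G.numV = 1 := by
      rw [hbs, Finset.union_comm] at hQb'
      exact hQb'
    show ((G.partialDual Q).vertexOrbits ∪ (G.partialDual Q).isolated).card = 1
    rw [horb]
    exact hnv
  · -- there is a kept flag
    obtain ⟨x0, hx0⟩ := hK
    have hx0F : x0 ∈ G.flags := QT_keep_subset hx0
    set B := Ribbon.orbitOf (QTkeep G Q) [(G.restrict Q).s0, (G.restrict Q).s1] x0 with hBdef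
    have hBmem : B ∈ (G.restrict Q).bSet := by
      rw [hbset]
      exact Finset.mem_union_left _ (Finset.mem_image_of_mem _ hx0)
    have hbB : (G.restrict Q).bSet = {B} := by
      obtain ⟨b, hb⟩ := Finset.card_eq_one.mp hQb'
      rw [hb] at hBmem ⊢
      rw [Finset.mem_singleton] at hBmem
      rw [hBmem]
    have horbK : Ribbon.orbits (QTkeep G Q) [(G.restrict Q).s0, (G.restrict Q).s1]
        = {B} := by
      refine Finset.Subset.antisymm ?_ (Finset.singleton_subset_iff.mpr
        (Finset.mem_image_of_mem _ hx0))
      rw [← hbB, hbset]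
      exact Finset.subset_union_left
    have hallK : ∀ x ∈ QTkeep G Q, ∀ y ∈ QTkeep G Q,
        Ribbon.Orb (QTkeep G Q) [(G.restrict Q).s0, (G.restrict Q).s1] x y :=
      fun x hx y hy => Ribbon.orb_of_card_orbits_eq_one (by rw [horbK]; simp) hx hy
    have hreach : ∀ x ∈ G.flags, ∃ g ∈ QTkeep G Q,
        Ribbon.Orb G.flags [G.s1, G.s2] x g := by
      intro x hx
      by_contra hcon
      push_neg at hcon
      have hvd : Ribbon.orbitOf G.flags [G.s1, G.s2] x ∈
          G.vertexOrbits.filter (fun v => v ∩ QTkeep G Q = ∅) := by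
        refine Finset.mem_filter.mpr ⟨Finset.mem_image_of_mem _ hx, ?_⟩
        rw [Finset.eq_empty_iff_forall_notMem]
        intro g hg
        obtain ⟨hg1, hg2⟩ := Finset.mem_inter.mp hg
        exact hcon g hg2 (Ribbon.mem_orbitOf.mp hg1).2
      have hmem : Ribbon.orbitOf G.flags [G.s1, G.s2] x ∈ (G.restrict Q).bSet := by
        rw [hbset]
        exact Finset.mem_union_right _ (Finset.mem_union_right _ hvd)
      rw [hbB, Finset.mem_singleton] at hmem
      have hx0B : x0 ∈ B := Ribbon.mem_orbitOf_self hx0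
      rw [← hmem] at hx0B
      exact hcon x0 hx0 (Ribbon.mem_orbitOf.mp hx0B).2
    have hallF : ∀ x ∈ G.flags, ∀ y ∈ G.flags,
        Ribbon.Orb G.flags [(G.partialDual Q).s1, (G.partialDual Q).s2] x y := by
      have hto : ∀ x ∈ G.flags, ∃ z ∈ QTkeep G Q,
          Ribbon.Orb G.flags [(G.partialDual Q).s1, (G.partialDual Q).s2] x z := by
        intro x hx
        obtain ⟨g, hg, hog⟩ := hreach x hx
        rcases QT_vertex_to_R hG hQsub hog with h | ⟨h1, _⟩
        · exact ⟨g, hg, h⟩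
        · exact h1
      intro x hx y hy
      obtain ⟨zx, hzx, hxz⟩ := hto x hx
      obtain ⟨zy, hzy, hyz⟩ := hto y hy
      have hmid := QT_restrict_to_R hG hQsub (hallK zx hzx zy hzy)
      exact Ribbon.orb_trans hxz (Ribbon.orb_trans hmid (Ribbon.orb_symm hyz))
    have hFne : G.flags.Nonempty := ⟨x0, hx0F⟩
    have hVO : (G.partialDual Q).vertexOrbits = {G.flags} := by
      show Ribbon.orbits G.flags [(G.partialDual Q).s1, (G.partialDual Q).s2]
          = {G.flags}
      exact Ribbon.orbits_eq_singleton hFne hallF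
    have hiso : G.isolated ⊆ {G.flags} := by
      intro I hI
      have hc' : (G.compOrbits ∪ G.isolated).card = 1 := hc
      obtain ⟨c, hcb⟩ := Finset.card_eq_one.mp hc'
      have hIc : I = c := by
        have : I ∈ G.compOrbits ∪ G.isolated := Finset.mem_union_right _ hI
        rwa [hcb, Finset.mem_singleton] at this
      have hCF : c = G.flags := by
        apply Finset.Subset.antisymm
        · have : c ∈ G.compOrbits ∪ G.isolated := by rw [hcb]; exact Finset.mem_singleton_self c
          have hcc : Ribbon.orbitOf G.flags [G.s0, G.s1, G.s2] x0 ∈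
              G.compOrbits ∪ G.isolated := Finset.mem_union_left _
            (Finset.mem_image_of_mem _ hx0F)
          rw [hcb, Finset.mem_singleton] at hcc
          rw [← hcc]
          exact Ribbon.orbitOf_subset
        · intro y hy
          have hyc : Ribbon.orbitOf G.flags [G.s0, G.s1, G.s2] y ∈
              G.compOrbits ∪ G.isolated := Finset.mem_union_left _
            (Finset.mem_image_of_mem _ hy)
          rw [hcb, Finset.mem_singleton] at hyc
          rw [← hyc]
          exact Ribbon.mem_orbitOf_self hy
      rw [hIc, hCF]
      exact Finset.mem_singleton_self _
    show ((G.partialDual Q).vertexOrbits ∪ (G.partialDual Q).isolated).card = 1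
    rw [hVO]
    show ({G.flags} ∪ G.isolated).card = 1
    rw [Finset.union_eq_left.mpr hiso]
    exact Finset.card_singleton _

end QTE
end
end

section
/- Let 𝔾 be a connected ribbon graph with a fixed total order ≺ on E(𝔾), let Q ∈ 𝒬_𝔾, and let Q' denote the quasi-tree 𝔾*∖E(Q) of 𝔾*. Then every edge e of 𝔾 is live with respect to Q if and only if it is live with respect to Q' (equivalently, e is dead with respect to Q if and only if it is dead with respect to Q'), and e is internal with respect to Q if and only if it is external with respect to Q'. -/
/-!
Formalization of ribbon graphs in the flag (graph-encoded-map) presentation: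
a finite set of flags with three involutions `s0, s1, s2` such that `s0 ∘ s2 = s2 ∘ s0`
is fixed-point-free, together with a finite set of (labelled) isolated vertices.
Vertices are the orbits of `⟨s1,s2⟩` together with the isolated vertices, edges the
orbits of `⟨s0,s2⟩`, boundary components the orbits of `⟨s0,s1⟩` together with one per
isolated vertex, and connected components the orbits of `⟨s0,s1,s2⟩` together with the
isolated vertices.  On top of this we define partial duality, deletion, contraction,
quasi-trees and their activities, packaged ribbon graphs, the packaged surface Tutte
polynomial and the generalised Krushkal polynomial.
-/

open scoped Classical

noncomputable section

/-!
Partial duality preserves the edges and composes by symmetric difference,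
`(𝔾^A)^B = 𝔾^{A ∆ B}`. Since `𝔾* = 𝔾^E`, the partial dual of `𝔾*` at `E ∖ Q` is
`𝔾^{E ∆ (E ∖ Q)} = 𝔾^Q`: the ribbon graph in which linking is read off is the same
for `Q` in `𝔾` and for `Q'` in `𝔾*`, so liveness agrees.
-/

namespace QTE

namespace Ribbon

variable {α : Type}

open scoped symmDiff

section Orbits

variable {F : Finset α} {fs : List (α → α)}

lemma orbitOf_eq_of_mem {x y : α} (h : y ∈ orbitOf F fs x) :
    orbitOf F fs y = orbitOf F fs x := by
  have hxy : Orb F fs x y := (Finset.mem_filter.1 h).2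
  refine Finset.filter_congr fun z _ => ⟨fun hz => hxy.trans _ _ _ hz, fun hz => ?_⟩
  exact hxy.symm.trans _ _ _ hz

lemma eq_of_mem_orbits {o₁ o₂ : Finset α} {x : α} (h₁ : o₁ ∈ orbits F fs)
    (h₂ : o₂ ∈ orbits F fs) (hx₁ : x ∈ o₁) (hx₂ : x ∈ o₂) : o₁ = o₂ := by
  obtain ⟨y₁, -, rfl⟩ := Finset.mem_image.1 h₁
  obtain ⟨y₂, -, rfl⟩ := Finset.mem_image.1 h₂
  rw [← orbitOf_eq_of_mem hx₁, orbitOf_eq_of_mem hx₂]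

lemma exists_mem_orbits {x : α} (hx : x ∈ F) : ∃ o ∈ orbits F fs, x ∈ o :=
  ⟨orbitOf F fs x, Finset.mem_image_of_mem _ hx, Finset.mem_filter.2 ⟨hx, .refl x⟩⟩

end Orbits

lemma mem_flagsOf {A : Finset (Finset α)} {f : α} : f ∈ flagsOf A ↔ ∃ e ∈ A, f ∈ e := by
  simp [flagsOf]

variable {G : Ribbon α}

lemma mem_flagsOf_iff {A : Finset (Finset α)} (hA : A ⊆ G.edgeSet) {e : Finset α}
    (he : e ∈ G.edgeSet) {f : α} (hf : f ∈ e) : f ∈ flagsOf A ↔ e ∈ A := by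
  refine mem_flagsOf.trans ⟨?_, fun heA => ⟨e, heA, hf⟩⟩
  rintro ⟨e', he'A, hfe'⟩
  rwa [eq_of_mem_orbits he (hA he'A) hf hfe']

lemma partialDual_edgeSet (A : Finset (Finset α)) : (G.partialDual A).edgeSet = G.edgeSet := by
  have hstep : Step G.flags [(G.partialDual A).s0, (G.partialDual A).s2] =
      Step G.flags [G.s0, G.s2] := by
    ext x y
    simp only [Step, partialDual, List.mem_cons, List.not_mem_nil, or_false,
      exists_eq_or_imp, exists_eq_left]
    constructor <;> rintro ⟨hx, hy, h⟩ <;> refine ⟨hx, hy, ?_⟩ <;>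
      by_cases hxA : x ∈ flagsOf A <;> simp_all [or_comm]
  show orbits G.flags _ = orbits G.flags _
  unfold orbits orbitOf Orb
  rw [hstep]

lemma partialDual_partialDual {A B : Finset (Finset α)} (hA : A ⊆ G.edgeSet)
    (hB : B ⊆ G.edgeSet) : (G.partialDual A).partialDual B = G.partialDual (A ∆ B) := by
  have hAB : A ∆ B ⊆ G.edgeSet := fun e he =>
    (Finset.mem_symmDiff.1 he).elim (fun h => hA h.1) (fun h => hB h.1)
  unfold partialDual
  congr 1 <;> funext f <;> by_cases hf : f ∈ G.flags <;> simp only [hf, if_true, if_false]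
  all_goals
    obtain ⟨e, he, hfe⟩ := exists_mem_orbits (fs := [G.s0, G.s2]) hf
    simp only [mem_flagsOf_iff hA he hfe, mem_flagsOf_iff hB he hfe,
      mem_flagsOf_iff hAB he hfe, Finset.mem_symmDiff]
    by_cases heA : e ∈ A <;> by_cases heB : e ∈ B <;> simp [heA, heB]

lemma dual_partialDual_sdiff {Q : Finset (Finset α)} (hQ : Q ⊆ G.edgeSet) :
    G.dual.partialDual (G.edgeSet \ Q) = G.partialDual Q := by
  have hcompl : G.edgeSet ∆ (G.edgeSet \ Q) = Q := by
    ext e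
    have := @hQ e
    simp only [Finset.mem_symmDiff, Finset.mem_sdiff]
    tauto
  rw [dual, partialDual_partialDual subset_rfl Finset.sdiff_subset, hcompl]

lemma subset_edgeSet_of_mem_quasiTrees {Q : Finset (Finset α)} (hQ : Q ∈ G.quasiTrees) :
    Q ⊆ G.edgeSet :=
  Finset.mem_powerset.1 (Finset.mem_filter.1 hQ).1

lemma dual_live_sdiff_iff {lt : Finset α → Finset α → Prop} {Q : Finset (Finset α)}
    (hQ : Q ⊆ G.edgeSet) {e : Finset α} : G.dual.Live lt (G.edgeSet \ Q) e ↔ G.Live lt Q e := by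
  unfold Live Links
  rw [dual, partialDual_edgeSet, ← dual, dual_partialDual_sdiff hQ]

end Ribbon

theorem live_internal_dual_general {α : Type} (G : Ribbon α)
    (lt : Finset α → Finset α → Prop)
    (Q : Finset (Finset α)) (hQ : Q ∈ G.quasiTrees)
    (e : Finset α) (he : e ∈ G.edgeSet) :
    (G.Live lt Q e ↔ G.dual.Live lt (G.edgeSet \ Q) e) ∧
    (e ∈ Q ↔ e ∉ G.edgeSet \ Q) := by
  refine ⟨(Ribbon.dual_live_sdiff_iff (Ribbon.subset_edgeSet_of_mem_quasiTrees hQ)).symm, ?_⟩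
  simp [he]

/-- Let `𝔾` be a connected ribbon graph with a fixed total order on
`E(𝔾)`, let `Q ∈ 𝒬_𝔾`, and let `Q'` denote the quasi-tree `𝔾*∖E(Q)` of `𝔾*`
(whose edge set is `E(𝔾)∖Q`).  Then every edge `e` of `𝔾` is live with respect
to `Q` iff it is live with respect to `Q'` (equivalently, dead iff dead), and
`e` is internal with respect to `Q` iff it is external with respect to `Q'`. -/
theorem live_internal_dual {α : Type} (G : Ribbon α) (hG : G.IsRibbon)
    (hc : G.Connected) (lt : Finset α → Finset α → Prop)
    (hlt : IsStrictTotalOrder (Finset α) lt)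
    (Q : Finset (Finset α)) (hQ : Q ∈ G.quasiTrees)
    (e : Finset α) (he : e ∈ G.edgeSet) :
    (G.Live lt Q e ↔ G.dual.Live lt (G.edgeSet \ Q) e) ∧
    (e ∈ Q ↔ e ∉ G.edgeSet \ Q) :=
  live_internal_dual_general G lt Q hQ e he

end QTE
end
end
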